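/- arXiv:1301.2352 — 4 statements merged into one kernel-verified Lean document; each statement's English description precedes it below -/
import Mathlib

section
/- The number of orbits of the natural rotation action of the cyclic group C_n on the set of binary strings of length n equals (1/n) * ∑_{d | n} φ(d) * 2^(n/d), where φ is Euler's totient function. -/
/-!
Rotations are the domain action of `ZMod n` on `ZMod n → Bool`, so Burnside's lemma applies.
A function is fixed by the rotation by `k` iff it is constant on the cosets of the subgroup
generated by `k`, of which there are `n / addOrderOf k`; and in a cyclic group of order `n`
exactly `φ d` elements have order `d`, for each `d ∣ n`.
-/

open AddAction

section DomAddAct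

variable {G α β : Type*} [AddGroup G] [AddAction G α]

lemma DomAddAct.mem_fixedBy_fun_iff (c : Gᵈᵃᵃ) (f : α → β) :
    f ∈ fixedBy (α → β) c ↔
      orbitRel (AddSubgroup.zmultiples (DomAddAct.mk.symm c)) α ≤ Setoid.ker f := by
  constructor
  · rintro hf x y ⟨⟨_, j, rfl⟩, rfl⟩
    exact congrFun (mem_fixedBy_zmultiples_iff_mem_fixedBy.mpr hf j) y
  · intro hf
    funext a
    exact hf ⟨⟨_, AddSubgroup.mem_zmultiples _⟩, rfl⟩

lemma DomAddAct.card_fixedBy_fun [Finite α] (c : Gᵈᵃᵃ) :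
    Nat.card (fixedBy (α → β) c) =
      Nat.card β ^ Nat.card (orbitRel.Quotient (AddSubgroup.zmultiples (DomAddAct.mk.symm c)) α) := by
  rw [← Nat.card_fun]
  exact Nat.card_congr
    ((Equiv.subtypeEquivRight (DomAddAct.mem_fixedBy_fun_iff c)).trans (Setoid.liftEquiv _))

end DomAddAct

lemma DomAddAct.orbitRel_fun_iff {G β : Type*} [AddCommGroup G] (f g : G → β) :
    orbitRel Gᵈᵃᵃ (G → β) f g ↔ ∃ k : G, ∀ i, g i = f (i - k) := by
  constructor
  · rintro ⟨c, rfl⟩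
    exact ⟨DomAddAct.mk.symm c, fun i => by simp [DomAddAct.vadd_apply]⟩
  · rintro ⟨k, hk⟩
    exact ⟨DomAddAct.mk k, funext fun i => by simp [DomAddAct.vadd_apply, hk]⟩

lemma AddSubgroup.card_orbitRel_quotient {G : Type*} [AddGroup G] (H : AddSubgroup G) :
    Nat.card (orbitRel.Quotient H G) = H.index :=
  Nat.card_congr (QuotientAddGroup.quotientRightRelEquivQuotientLeftRel H)

lemma AddSubgroup.index_zmultiples_mul_addOrderOf {G : Type*} [AddGroup G] (g : G) :
    (zmultiples g).index * addOrderOf g = Nat.card G := by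
  rw [← Nat.card_zmultiples, index_mul_card]

lemma IsAddCyclic.sum_addOrderOf {G M : Type*} [AddGroup G] [Fintype G] [IsAddCyclic G]
    [AddCommMonoid M] (f : ℕ → M) :
    ∑ g : G, f (addOrderOf g) = ∑ d ∈ (Nat.card G).divisors, Nat.totient d • f d := by
  classical
  rw [← Finset.sum_fiberwise_of_maps_to (g := addOrderOf) (t := (Nat.card G).divisors)
    (fun g _ => Nat.mem_divisors.mpr ⟨addOrderOf_dvd_natCard g, Nat.card_pos.ne'⟩)]
  refine Finset.sum_congr rfl fun d hd => ?_
  rw [Nat.card_eq_fintype_card] at hd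
  rw [← IsAddCyclic.card_addOrderOf_eq_totient (Nat.dvd_of_mem_divisors hd), ← Finset.sum_const]
  exact Finset.sum_congr rfl fun g hg => by rw [(Finset.mem_filter.mp hg).2]

theorem IsAddCyclic.card_orbitRel_quotient_domAddAct_fun_mul_card (G β : Type*) [AddGroup G]
    [Fintype G] [IsAddCyclic G] [Finite β] :
    Nat.card (orbitRel.Quotient Gᵈᵃᵃ (G → β)) * Nat.card G
      = ∑ d ∈ (Nat.card G).divisors, Nat.totient d * Nat.card β ^ (Nat.card G / d) := by
  classical
  have := Fintype.ofFinite β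
  have : Fintype Gᵈᵃᵃ := Fintype.ofEquiv G DomAddAct.mk
  have := Fintype.ofFinite (orbitRel.Quotient Gᵈᵃᵃ (G → β))
  have hindex (g : G) : (AddSubgroup.zmultiples g).index = Nat.card G / addOrderOf g := by
    rw [← AddSubgroup.index_zmultiples_mul_addOrderOf,
      Nat.mul_div_cancel _ (addOrderOf_pos g)]
  calc Nat.card (orbitRel.Quotient Gᵈᵃᵃ (G → β)) * Nat.card G
      = ∑ c : Gᵈᵃᵃ, Fintype.card (fixedBy (G → β) c) := by
        rw [sum_card_fixedBy_eq_card_orbits_mul_card_addGroup, Nat.card_eq_fintype_card,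
          Nat.card_eq_fintype_card, Fintype.card_congr (DomAddAct.mk (M := G))]
    _ = ∑ g : G, Nat.card β ^ (Nat.card G / addOrderOf g) :=
        Fintype.sum_equiv DomAddAct.mk.symm _ (fun g => Nat.card β ^ (Nat.card G / addOrderOf g))
          fun c => by
            rw [← Nat.card_eq_fintype_card, DomAddAct.card_fixedBy_fun,
              AddSubgroup.card_orbitRel_quotient, hindex]
    _ = _ := by
        simp only [IsAddCyclic.sum_addOrderOf fun d => Nat.card β ^ (Nat.card G / d), smul_eq_mul]

/-- The number of orbits of the rotation action of `C_n = ZMod n` on binary strings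
of length `n` (functions `ZMod n → Bool`, with `(k • f) i = f (i - k)`) equals
`(1/n) * ∑_{d ∣ n} φ(d) * 2^(n/d)`, stated multiplied through by `n`. -/
theorem necklace_count (n : ℕ) (hn : 1 ≤ n) :
    Nat.card (Quot (fun f g : ZMod n → Bool => ∃ k : ZMod n, ∀ i, g i = f (i - k))) * n
      = ∑ d ∈ n.divisors, Nat.totient d * 2 ^ (n / d) := by
  have : NeZero n := ⟨by omega⟩
  have hcount := IsAddCyclic.card_orbitRel_quotient_domAddAct_fun_mul_card (ZMod n) Bool
  rw [Nat.card_zmod, Nat.card_eq_fintype_card (α := Bool), Fintype.card_bool] at hcount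
  rw [Nat.card_congr (Quot.congrRight fun f g => (DomAddAct.orbitRel_fun_iff f g).symm)]
  exact hcount
end

section
/- Let m be odd. The permutation of Fin m that reverses the first m - i entries and reverses the last i entries (for 0 ≤ i < m) has exactly (m+1)/2 cycles (namely (m-1)/2 transpositions and one fixed point). -/
/-- Index of the orbit of `a` under the reflection permutation. -/
def reflIdxVal (m i a : ℕ) : ℕ :=
  if a < m - i then min a (m - i - 1 - a)
  else (m - i + 1) / 2 + (min a (2 * m - i - 1 - a) - (m - i))

/-- Canonical representative of orbit `j` of the reflection permutation. -/
def reflRepVal (m i j : ℕ) : ℕ :=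
  if j < (m - i + 1) / 2 then j else (m - i) + (j - (m - i + 1) / 2)

/-- If a relation admits an index function and a section, its quotient has card `N`. -/
theorem quot_card_aux {α : Type*} (r : α → α → Prop) (N : ℕ)
    (idx : α → Fin N) (rep : Fin N → α)
    (h1 : ∀ a b, r a b → idx a = idx b)
    (h2 : ∀ j, idx (rep j) = j)
    (h3 : ∀ a, Quot.mk r (rep (idx a)) = Quot.mk r a) :
    Nat.card (Quot r) = N := by
  have e : Quot r ≃ Fin N :=
    { toFun := Quot.lift idx h1
      invFun := fun j => Quot.mk r (rep j)
      left_inv := by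
        intro q
        induction q using Quot.ind with
        | _ a => exact h3 a
      right_inv := fun j => h2 j }
  simp [Nat.card_congr e]

/-- For `m` odd and `0 ≤ i < m`, the permutation of `Fin m` reversing the first
`m - i` entries and reversing the last `i` entries has exactly `(m+1)/2` cycles. -/
theorem cycles_reflection_odd (m i : ℕ) (hm : Odd m) (hi : i < m) :
    Nat.card (Quot (fun a b : Fin m =>
        b = if h : (a : ℕ) < m - i
            then (⟨m - i - 1 - a, by have := a.isLt; omega⟩ : Fin m)
            else ⟨2 * m - i - 1 - a, by have := a.isLt; omega⟩))
      = (m + 1) / 2 := by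
  obtain ⟨t, ht⟩ := hm
  refine quot_card_aux _ ((m + 1) / 2)
    (fun a => ⟨reflIdxVal m i a,
      by have := a.isLt; unfold reflIdxVal; split <;> omega⟩)
    (fun j => ⟨reflRepVal m i j,
      by have := j.isLt; unfold reflRepVal; split <;> omega⟩) ?_ ?_ ?_
  · intro a b hab
    have ha := a.isLt
    have hb' := b.isLt
    have hb : (b : ℕ) = if (a : ℕ) < m - i then m - i - 1 - a else 2 * m - i - 1 - a := by
      rw [hab]
      by_cases h : (a : ℕ) < m - i
      · rw [dif_pos h, if_pos h]
      · rw [dif_neg h, if_neg h]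
    apply Fin.ext
    show reflIdxVal m i (a : ℕ) = reflIdxVal m i (b : ℕ)
    unfold reflIdxVal
    split_ifs at hb ⊢ <;> omega
  · intro j
    have hj := j.isLt
    apply Fin.ext
    show reflIdxVal m i (reflRepVal m i (j : ℕ)) = (j : ℕ)
    unfold reflIdxVal reflRepVal
    split_ifs <;> omega
  · intro a
    have ha := a.isLt
    have hval : reflRepVal m i (reflIdxVal m i (a : ℕ)) = a ∨
        reflRepVal m i (reflIdxVal m i (a : ℕ))
          = (if (a : ℕ) < m - i then m - i - 1 - a else 2 * m - i - 1 - a) := by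
      unfold reflIdxVal reflRepVal
      split_ifs <;> omega
    rcases hval with h | h
    · exact congrArg _ (Fin.ext (h : _ = ((a : Fin m) : ℕ)))
    · refine (Quot.sound ?_).symm
      refine Fin.ext ?_
      by_cases hc : (a : ℕ) < m - i
      · rw [dif_pos hc]
        exact h.trans (if_pos hc)
      · rw [dif_neg hc]
        exact h.trans (if_neg hc)
end

section
/- For m, n ≥ 1, the quantity (1/(mn)) * ∑_{c | m} ∑_{d | n} φ(c) φ(d) 2^(mn/lcm(c,d)) is a positive integer. -/
set_option synthInstance.maxHeartbeats 1000000
open MulAction Subgroup Finset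

attribute [local instance] arrowAction

section Fixed

variable {G : Type*} [CommGroup G] (g : G)

/-- fixed functions are functions on the quotient by `zpowers g`. -/
noncomputable def fixedEquiv : fixedBy (G → Bool) g ≃ (G ⧸ zpowers g → Bool) where
  toFun f := Quotient.lift (f : G → Bool) (by
    intro x y hxy
    replace hxy : x⁻¹ * y ∈ zpowers g := QuotientGroup.leftRel_apply.mp hxy
    have hst : zpowers g ≤ stabilizer G (f : G → Bool) :=
      (zpowers_le).mpr (mem_stabilizer_iff.mpr f.2)
    have h : x * y⁻¹ ∈ zpowers g := by
      have := (zpowers g).inv_mem hxy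
      simpa [mul_comm] using this
    have hf : (x * y⁻¹) • (f : G → Bool) = f := hst h
    calc (f : G → Bool) x = ((x * y⁻¹) • (f : G → Bool)) x := by rw [hf]
      _ = (f : G → Bool) ((x * y⁻¹)⁻¹ * x) := rfl
      _ = (f : G → Bool) y := by rw [show (x * y⁻¹)⁻¹ * x = y by group])
  invFun F := ⟨fun x => F (QuotientGroup.mk x), by
    funext a
    show F (QuotientGroup.mk (g⁻¹ * a)) = F (QuotientGroup.mk a)
    congr 1
    rw [QuotientGroup.eq]
    have hg : (g⁻¹ * a)⁻¹ * a = g := by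
      rw [mul_inv_rev, inv_inv, mul_comm a⁻¹ g, mul_assoc, inv_mul_cancel, mul_one]
    rw [hg]
    exact mem_zpowers g⟩
  left_inv f := by ext a; rfl
  right_inv F := by
    funext q
    induction q using QuotientGroup.induction_on
    rfl

lemma card_fixedBy_arrow [Finite G] :
    Nat.card (fixedBy (G → Bool) g) = 2 ^ (Nat.card G / orderOf g) := by
  rw [Nat.card_congr (fixedEquiv g), Nat.card_fun]
  congr 1
  · simp
  rw [← Subgroup.index_eq_card]
  have h := Subgroup.card_mul_index (zpowers g)
  rw [Nat.card_zpowers] at h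
  have hpos : 0 < orderOf g := orderOf_pos g
  rw [← h, Nat.mul_div_cancel_left _ hpos]

end Fixed

section Burnside

variable (G : Type*) [CommGroup G] [Fintype G]

lemma burnside_divides :
    ∃ k : ℕ, 0 < k ∧ (∑ g : G, 2 ^ (Fintype.card G / orderOf g)) = k * Fintype.card G := by
  classical
  letI : ∀ a : G, Fintype (fixedBy (G → Bool) a) := fun a => Fintype.ofFinite _
  letI : Fintype (Quotient (orbitRel G (G → Bool))) := Fintype.ofFinite _
  refine ⟨Fintype.card (Quotient (orbitRel G (G → Bool))), Fintype.card_pos, ?_⟩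
  have h := MulAction.sum_card_fixedBy_eq_card_orbits_mul_card_group G (G → Bool)
  rw [← h]
  refine Finset.sum_congr rfl fun g _ => ?_
  rw [← Nat.card_eq_fintype_card (α := fixedBy (G → Bool) g), card_fixedBy_arrow,
    Nat.card_eq_fintype_card]

end Burnside

/-- For `m, n ≥ 1`, the quantity `(1/(mn)) ∑_{c ∣ m} ∑_{d ∣ n} φ(c) φ(d) 2^(mn/lcm(c,d))`
is a positive integer: the double sum equals `m * n * k` for some positive natural `k`. -/
theorem burnside_sum_is_positive_integer (m n : ℕ) (hm : 1 ≤ m) (hn : 1 ≤ n) :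
    ∃ k : ℕ, 0 < k ∧
      (∑ c ∈ m.divisors, ∑ d ∈ n.divisors,
          Nat.totient c * Nat.totient d * 2 ^ (m * n / Nat.lcm c d)) = m * n * k := by
  classical
  haveI : NeZero m := ⟨by omega⟩
  haveI : NeZero n := ⟨by omega⟩
  let A := Multiplicative (ZMod m)
  let B := Multiplicative (ZMod n)
  have hcard : Fintype.card (Multiplicative (ZMod m) × Multiplicative (ZMod n)) = m * n := by
    simp
  obtain ⟨k, hk, hsum⟩ := burnside_divides (Multiplicative (ZMod m) × Multiplicative (ZMod n))
  refine ⟨k, hk, ?_⟩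
  rw [hcard] at hsum
  -- rewrite the divisor sum as the group sum
  have key : (∑ c ∈ m.divisors, ∑ d ∈ n.divisors,
      Nat.totient c * Nat.totient d * 2 ^ (m * n / Nat.lcm c d))
      = ∑ g : Multiplicative (ZMod m) × Multiplicative (ZMod n), 2 ^ (m * n / orderOf g) := by
    rw [← Finset.sum_product']
    have hmaps : ∀ g : Multiplicative (ZMod m) × Multiplicative (ZMod n), g ∈ Finset.univ →
        (orderOf g.1, orderOf g.2) ∈ m.divisors ×ˢ n.divisors := by
      intro g _
      simp only [Finset.mem_product, Nat.mem_divisors]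
      refine ⟨⟨?_, NeZero.ne m⟩, ?_, NeZero.ne n⟩
      · simpa using orderOf_dvd_card (x := g.1)
      · simpa using orderOf_dvd_card (x := g.2)
    rw [← Finset.sum_fiberwise_of_maps_to hmaps
      (fun g : Multiplicative (ZMod m) × Multiplicative (ZMod n) => 2 ^ (m * n / orderOf g))]
    refine Finset.sum_congr rfl fun p hp => ?_
    obtain ⟨c, d⟩ := p
    simp only [Finset.mem_product, Nat.mem_divisors] at hp
    have hfilter : Finset.filter (fun g : Multiplicative (ZMod m) × Multiplicative (ZMod n) =>
        (orderOf g.1, orderOf g.2) = (c, d)) Finset.univ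
        = (Finset.filter (fun a : Multiplicative (ZMod m) => orderOf a = c) Finset.univ) ×ˢ
          (Finset.filter (fun b : Multiplicative (ZMod n) => orderOf b = d) Finset.univ) := by
      ext g
      simp [Finset.mem_product, Prod.ext_iff]
    have hordeq : ∀ g : Multiplicative (ZMod m) × Multiplicative (ZMod n),
        (orderOf g.1, orderOf g.2) = (c, d) → orderOf g = Nat.lcm c d := by
      intro g hg
      rw [Prod.orderOf]
      rw [Prod.mk.injEq] at hg
      rw [hg.1, hg.2]
    rw [Finset.sum_congr rfl (fun g hg => by
      rw [hordeq g (Finset.mem_filter.mp hg).2]), Finset.sum_const, hfilter,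
      Finset.card_product]
    have h1 : #(Finset.filter (fun a : Multiplicative (ZMod m) => orderOf a = c) Finset.univ)
        = Nat.totient c := by
      have : c ∣ Fintype.card (Multiplicative (ZMod m)) := by simpa using hp.1.1
      simpa using IsCyclic.card_orderOf_eq_totient (α := Multiplicative (ZMod m)) this
    have h2 : #(Finset.filter (fun b : Multiplicative (ZMod n) => orderOf b = d) Finset.univ)
        = Nat.totient d := by
      have : d ∣ Fintype.card (Multiplicative (ZMod n)) := by simpa using hp.2.1
      simpa using IsCyclic.card_orderOf_eq_totient (α := Multiplicative (ZMod n)) this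
    rw [h1, h2, smul_eq_mul]
  rw [key, hsum]
  ring
end

section
/- Burnside count for the pure reflection part: for m, n ≥ 1, (1/(4mn)) ∑_{i=0}^{m-1} ∑_{j=0}^{n-1} 2^{D_{ij}}, where D_{ij} is the number of cycles of the permutation (x,y) ↦ (i - 1 - x, j - 1 - y) of ZMod m × ZMod n, equals 2^((mn-3)/2) if m and n are both odd; 3·2^(mn/2 - 3) if exactly one of m, n is even; and 7·2^(mn/2 - 4) if both are even. -/
/-!
Since `(x, y) ↦ (i - 1 - x, j - 1 - y)` is an involution, twice its number of cycles is
`mn` plus its number of fixed points. A fixed point is a pair of solutions of `2x = i - 1` in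
`ZMod m` and `2y = j - 1` in `ZMod n`; for odd `m` there is exactly one solution, while for even
`m` there are two or none according as `i` is odd or even. Summing `2 ^ D i j` over `i, j` is
then a count of parities.
-/

open Function Finset

namespace Function.Involutive

variable {α : Type*} {f : α → α}

theorem quot_mk_eq_iff (hf : Involutive f) {a b : α} :
    Quot.mk (fun p q => q = f p) a = Quot.mk _ b ↔ b = a ∨ b = f a := by
  have hR : Equivalence fun a b : α => b = a ∨ b = f a :=
    { refl _ := .inl rfl
      symm := by rintro x y (rfl | rfl); exacts [.inl rfl, .inr (hf _).symm]
      trans := by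
        rintro x y z (rfl | rfl) (rfl | rfl); exacts [.inl rfl, .inr rfl, .inr rfl, .inl (hf _)] }
  refine ⟨fun h => hR.eqvGen_iff.1 (Relation.EqvGen.mono (fun _ _ => .inr) _ _ (Quot.eq.1 h)), ?_⟩
  rintro (rfl | rfl)
  exacts [rfl, Quot.sound rfl]

/-- Choosing a linear order, every orbit has a unique representative `x` with `x ≤ f x`; the
points with `f x ≤ x` are equinumerous with these, and both kinds together cover `α` with
overlap exactly the fixed points. -/
theorem two_mul_card_quot [Finite α] (hf : Involutive f) :
    2 * Nat.card (Quot fun p q : α => q = f p) = Nat.card α + Nat.card (fixedPoints f) := by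
  let _ : LinearOrder α := LinearOrder.lift' _ (Finite.equivFin α).injective
  have hrep : Nat.card (Quot fun p q : α => q = f p) = {x | x ≤ f x}.ncard := by
    rw [← Nat.card_coe_set_eq]
    refine (Nat.card_eq_of_bijective (fun x => Quot.mk _ x.1) ⟨?_, ?_⟩).symm
    · rintro ⟨x, hx⟩ ⟨y, hy⟩ hxy
      rcases hf.quot_mk_eq_iff.1 hxy with rfl | rfl
      · rfl
      · simp only [Set.mem_ofPred_eq, hf x] at hy
        exact Subtype.ext (le_antisymm hx hy)
    · refine Quot.ind fun x => ?_
      rcases le_total x (f x) with hx | hx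
      · exact ⟨⟨x, hx⟩, rfl⟩
      · exact ⟨⟨f x, by rwa [Set.mem_ofPred_eq, hf x]⟩, Quot.sound (hf x).symm⟩
  have hswap : {x | f x ≤ x}.ncard = {x | x ≤ f x}.ncard := by
    simp only [← Nat.card_coe_set_eq]
    exact Nat.card_congr ((hf.toPerm f).subtypeEquiv fun x => by simp [hf x])
  have hunion : {x | x ≤ f x} ∪ {x | f x ≤ x} = Set.univ :=
    Set.eq_univ_of_forall fun x => le_total x (f x)
  have hinter : {x | x ≤ f x} ∩ {x | f x ≤ x} = fixedPoints f :=
    Set.ext fun x => ((le_antisymm_iff (a := f x)).trans and_comm).symm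
  rw [hrep, Nat.card_coe_set_eq, ← Set.ncard_univ, ← hunion, ← hinter,
    Set.ncard_union_add_ncard_inter, hswap, two_mul]

end Function.Involutive

theorem card_fixedPoints_sub_prod {G H : Type*} [AddGroup G] [AddGroup H] (a : G) (b : H) :
    Nat.card (fixedPoints fun p : G × H => (a - p.1, b - p.2))
      = Nat.card {x : G // x + x = a} * Nat.card {y : H // y + y = b} := by
  rw [← Nat.card_prod]
  refine Nat.card_congr ((Equiv.subtypeEquivRight fun p => ?_).trans Equiv.subtypeProdEquivProd)
  simp only [mem_fixedPoints, IsFixedPt, Prod.ext_iff, sub_eq_iff_eq_add]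
  exact and_congr eq_comm eq_comm

theorem two_mul_card_quot_sub_prod {G H : Type*} [AddCommGroup G] [AddCommGroup H]
    [Finite G] [Finite H] (a : G) (b : H) :
    2 * Nat.card (Quot fun p q : G × H => q = (a - p.1, b - p.2))
      = Nat.card G * Nat.card H
        + Nat.card {x : G // x + x = a} * Nat.card {y : H // y + y = b} := by
  rw [Involutive.two_mul_card_quot fun p => by simp, card_fixedPoints_sub_prod, Nat.card_prod]

namespace ZMod

theorem card_add_self_eq_of_odd {m : ℕ} (hm : Odd m) (c : ZMod m) :
    Nat.card {x : ZMod m // x + x = c} = 1 := by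
  have h2 : IsUnit (2 : ZMod m) := by
    simpa using (isUnit_iff_coprime 2 m).2 (Nat.coprime_two_left.2 hm)
  rw [Nat.card_eq_one_iff_unique]
  refine ⟨⟨fun ⟨x, hx⟩ ⟨y, hy⟩ => Subtype.ext (h2.mul_left_cancel ?_)⟩, ⟨⟨h2.unit⁻¹ * c, ?_⟩⟩⟩
  · rw [two_mul, two_mul, hx, hy]
  · rw [← two_mul, ← mul_assoc, h2.mul_val_inv, one_mul]

theorem add_self_eq_zero_iff_eq_zero_or_eq_half {k : ℕ} [NeZero k] {y : ZMod (2 * k)} :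
    y + y = 0 ↔ y = 0 ∨ y = k := by
  obtain ⟨v, hv, rfl⟩ : ∃ v < 2 * k, (v : ZMod (2 * k)) = y :=
    ⟨y.val, y.val_lt, y.natCast_zmod_val⟩
  have hk : 0 < k := Nat.pos_of_neZero k
  rw [← Nat.cast_add, ← two_mul, natCast_eq_zero_iff, Nat.mul_dvd_mul_iff_left two_pos,
    natCast_eq_zero_iff, natCast_eq_natCast_iff', Nat.mod_eq_of_lt hv,
    Nat.mod_eq_of_lt (by omega : k < 2 * k)]
  constructor
  · rintro ⟨t, rfl⟩
    have : t < 2 := by nlinarith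
    interval_cases t <;> simp
  · rintro (h | rfl)
    · exact (Nat.eq_zero_of_dvd_of_lt h hv) ▸ dvd_zero k
    · exact dvd_rfl

theorem card_add_self_eq_natCast_sub_one {k : ℕ} [NeZero k] (i : ℕ) :
    Nat.card {x : ZMod (2 * k) // x + x = i - 1} = if Odd i then 2 else 0 := by
  split_ifs with hi
  · obtain ⟨t, rfl⟩ := hi
    have hsol : {x : ZMod (2 * k) | x + x = ((2 * t + 1 : ℕ) : ZMod (2 * k)) - 1}
        = {(t : ZMod (2 * k)), (t : ZMod (2 * k)) + k} := by
      ext x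
      have hshift : x + x = ((2 * t + 1 : ℕ) : ZMod (2 * k)) - 1 ↔ (x - t) + (x - t) = 0 := by
        push_cast
        constructor <;> intro h <;> linear_combination h
      rw [Set.mem_ofPred_eq, hshift, add_self_eq_zero_iff_eq_zero_or_eq_half, sub_eq_zero,
        sub_eq_iff_eq_add']
      rfl
    have hk : (k : ZMod (2 * k)) ≠ 0 := by
      have hk0 : 0 < k := Nat.pos_of_neZero k
      exact (natCast_eq_zero_iff _ _).not.2 (Nat.not_dvd_of_pos_of_lt hk0 (by omega))
    have hne : (t : ZMod (2 * k)) ≠ t + k := by simpa using hk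
    calc Nat.card {x : ZMod (2 * k) // x + x = ((2 * t + 1 : ℕ) : ZMod (2 * k)) - 1}
        = ({(t : ZMod (2 * k)), (t : ZMod (2 * k)) + k} : Set (ZMod (2 * k))).ncard := by
          rw [← hsol]; exact Nat.card_coe_set_eq _
      _ = 2 := Set.ncard_pair hne
  · rw [Nat.card_eq_zero]
    left
    refine ⟨fun ⟨x, hx⟩ => ?_⟩
    -- modulo 2, `x + x` vanishes while `i - 1` does not
    have := congrArg (castHom (dvd_mul_right 2 k) (ZMod 2)) hx
    rw [map_add, map_sub, map_natCast, map_one,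
      natCast_eq_zero_iff_even.2 (Nat.not_odd_iff_even.1 hi)] at this
    generalize castHom (dvd_mul_right 2 k) (ZMod 2) x = y at this
    revert y
    decide

end ZMod

theorem Finset.sum_range_two_mul_ite_odd {M : Type*} [AddCommMonoid M] (k : ℕ) (A B : M) :
    ∑ i ∈ range (2 * k), (if Odd i then A else B) = k • (A + B) := by
  induction k with
  | zero => simp
  | succ k ih =>
    rw [mul_add_one, sum_range_succ, sum_range_succ, ih, succ_nsmul,
      if_neg (by simp), if_pos (by simp), add_assoc, add_comm B]

noncomputable def reflectionCycles (m n i j : ℕ) : ℕ :=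
  Nat.card (Quot fun p q : ZMod m × ZMod n =>
    q = ((i : ZMod m) - 1 - p.1, (j : ZMod n) - 1 - p.2))

theorem two_mul_reflectionCycles (m n i j : ℕ) [NeZero m] [NeZero n] :
    2 * reflectionCycles m n i j = m * n
      + Nat.card {x : ZMod m // x + x = i - 1} * Nat.card {y : ZMod n // y + y = j - 1} := by
  rw [reflectionCycles, two_mul_card_quot_sub_prod, Nat.card_zmod, Nat.card_zmod]

section

variable {m n a b : ℕ}

theorem average_two_pow_reflectionCycles_of_odd_of_odd (hm : Odd m) (hn : Odd n) :
    (1 / (4 * m * n) : ℚ) * ∑ i ∈ range m, ∑ j ∈ range n, (2 : ℚ) ^ reflectionCycles m n i j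
      = 2 ^ (((m * n : ℤ) - 3) / 2) := by
  have : NeZero m := ⟨hm.pos.ne'⟩
  have : NeZero n := ⟨hn.pos.ne'⟩
  have hm0 : (m : ℚ) ≠ 0 := Nat.cast_ne_zero.2 (NeZero.ne m)
  have hn0 : (n : ℚ) ≠ 0 := Nat.cast_ne_zero.2 (NeZero.ne n)
  have hD (i j : ℕ) : reflectionCycles m n i j = (m * n + 1) / 2 := by
    have := two_mul_reflectionCycles m n i j
    rw [ZMod.card_add_self_eq_of_odd hm, ZMod.card_add_self_eq_of_odd hn] at this
    omega
  have hexp : ((m * n : ℤ) - 3) / 2 = ((m * n + 1) / 2 : ℕ) - 2 := by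
    have := Nat.odd_iff.1 (hm.mul hn)
    push_cast
    omega
  simp only [hD, sum_const, card_range, nsmul_eq_mul]
  rw [hexp, zpow_sub₀ two_ne_zero, zpow_natCast]
  field_simp
  ring

theorem average_two_pow_reflectionCycles_of_even_of_odd [NeZero a] (hn : Odd n) :
    (1 / (4 * (2 * a : ℕ) * n) : ℚ)
        * ∑ i ∈ range (2 * a), ∑ j ∈ range n, (2 : ℚ) ^ reflectionCycles (2 * a) n i j
      = 3 * 2 ^ (((2 * a : ℕ) * n : ℤ) / 2 - 3) := by
  have : NeZero n := ⟨hn.pos.ne'⟩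
  have ha0 : (a : ℚ) ≠ 0 := Nat.cast_ne_zero.2 (NeZero.ne a)
  have hn0 : (n : ℚ) ≠ 0 := Nat.cast_ne_zero.2 (NeZero.ne n)
  have hD (i j : ℕ) : (2 : ℚ) ^ reflectionCycles (2 * a) n i j
      = if Odd i then 2 ^ (a * n + 1) else 2 ^ (a * n) := by
    have := two_mul_reflectionCycles (2 * a) n i j
    rw [ZMod.card_add_self_eq_natCast_sub_one, ZMod.card_add_self_eq_of_odd hn] at this
    split_ifs at this ⊢ <;> congr 1 <;> push_cast at this <;> linarith
  have hexp : ((2 * a : ℕ) * n : ℤ) / 2 - 3 = (a * n : ℕ) - 3 := by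
    push_cast; ring_nf; omega
  simp only [hD, sum_const, card_range, nsmul_eq_mul]
  rw [← mul_sum, sum_range_two_mul_ite_odd, nsmul_eq_mul, hexp, zpow_sub₀ two_ne_zero,
    zpow_natCast]
  field_simp
  push_cast
  ring

theorem average_two_pow_reflectionCycles_of_odd_of_even (hm : Odd m) [NeZero b] :
    (1 / (4 * m * (2 * b : ℕ)) : ℚ)
        * ∑ i ∈ range m, ∑ j ∈ range (2 * b), (2 : ℚ) ^ reflectionCycles m (2 * b) i j
      = 3 * 2 ^ ((m * (2 * b : ℕ) : ℤ) / 2 - 3) := by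
  have : NeZero m := ⟨hm.pos.ne'⟩
  have hm0 : (m : ℚ) ≠ 0 := Nat.cast_ne_zero.2 (NeZero.ne m)
  have hb0 : (b : ℚ) ≠ 0 := Nat.cast_ne_zero.2 (NeZero.ne b)
  have hD (i j : ℕ) : (2 : ℚ) ^ reflectionCycles m (2 * b) i j
      = if Odd j then 2 ^ (m * b + 1) else 2 ^ (m * b) := by
    have := two_mul_reflectionCycles m (2 * b) i j
    rw [ZMod.card_add_self_eq_natCast_sub_one, ZMod.card_add_self_eq_of_odd hm] at this
    split_ifs at this ⊢ <;> congr 1 <;> push_cast at this <;> linarith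
  have hexp : (m * (2 * b : ℕ) : ℤ) / 2 - 3 = (m * b : ℕ) - 3 := by
    push_cast; ring_nf; omega
  simp only [hD, sum_range_two_mul_ite_odd, sum_const, card_range, nsmul_eq_mul]
  rw [hexp, zpow_sub₀ two_ne_zero, zpow_natCast]
  field_simp
  push_cast
  ring

theorem average_two_pow_reflectionCycles_of_even_of_even [NeZero a] [NeZero b] :
    (1 / (4 * (2 * a : ℕ) * (2 * b : ℕ)) : ℚ)
        * ∑ i ∈ range (2 * a), ∑ j ∈ range (2 * b),
          (2 : ℚ) ^ reflectionCycles (2 * a) (2 * b) i j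
      = 7 * 2 ^ (((2 * a : ℕ) * (2 * b : ℕ) : ℤ) / 2 - 4) := by
  have ha0 : (a : ℚ) ≠ 0 := Nat.cast_ne_zero.2 (NeZero.ne a)
  have hb0 : (b : ℚ) ≠ 0 := Nat.cast_ne_zero.2 (NeZero.ne b)
  have hD (i j : ℕ) : (2 : ℚ) ^ reflectionCycles (2 * a) (2 * b) i j
      = if Odd i then (if Odd j then 2 ^ (2 * a * b + 2) else 2 ^ (2 * a * b))
        else 2 ^ (2 * a * b) := by
    have := two_mul_reflectionCycles (2 * a) (2 * b) i j
    rw [ZMod.card_add_self_eq_natCast_sub_one, ZMod.card_add_self_eq_natCast_sub_one] at this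
    split_ifs at this ⊢ <;> congr 1 <;> push_cast at this <;> linarith
  have hexp : ((2 * a : ℕ) * (2 * b : ℕ) : ℤ) / 2 - 4 = (2 * a * b : ℕ) - 4 := by
    push_cast; ring_nf; omega
  simp only [hD, sum_ite_irrel, sum_range_two_mul_ite_odd, sum_const, card_range, nsmul_eq_mul]
  rw [hexp, zpow_sub₀ two_ne_zero, zpow_natCast]
  field_simp
  push_cast
  ring

end

/-- Burnside count for the pure reflection part: with `D i j` the number of cycles
(orbits) of the involution `(x,y) ↦ (i - 1 - x, j - 1 - y)` of `ZMod m × ZMod n`,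
the average `(1/(4mn)) ∑_{i<m} ∑_{j<n} 2^(D i j)` equals `2^((mn-3)/2)` if `m, n` are
both odd, `3·2^(mn/2-3)` if exactly one is even, and `7·2^(mn/2-4)` if both are even. -/
theorem burnside_reflection_part (m n : ℕ) (hm : 1 ≤ m) (hn : 1 ≤ n) :
    (1 / (4 * m * n) : ℚ) * ∑ i ∈ Finset.range m, ∑ j ∈ Finset.range n,
        (2 : ℚ) ^ (Nat.card (Quot (fun p q : ZMod m × ZMod n =>
          q = ((i : ZMod m) - 1 - p.1, (j : ZMod n) - 1 - p.2))))
      = if Odd m ∧ Odd n then (2 : ℚ) ^ (((m * n : ℤ) - 3) / 2)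
        else if Even m ∧ Even n then 7 * (2 : ℚ) ^ ((m * n : ℤ) / 2 - 4)
        else 3 * (2 : ℚ) ^ ((m * n : ℤ) / 2 - 3) := by
  change (1 / (4 * m * n) : ℚ) * ∑ i ∈ range m, ∑ j ∈ range n, (2 : ℚ) ^ reflectionCycles m n i j
    = _
  obtain ⟨a, rfl | rfl⟩ := Nat.even_or_odd' m <;> obtain ⟨b, rfl | rfl⟩ := Nat.even_or_odd' n
  · have : NeZero a := ⟨by omega⟩
    have : NeZero b := ⟨by omega⟩
    rw [if_neg (by simp), if_pos (by simp), average_two_pow_reflectionCycles_of_even_of_even]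
  · have : NeZero a := ⟨by omega⟩
    rw [if_neg (by simp), if_neg (by simp),
      average_two_pow_reflectionCycles_of_even_of_odd (by simp)]
  · have : NeZero b := ⟨by omega⟩
    rw [if_neg (by simp), if_neg (by simp),
      average_two_pow_reflectionCycles_of_odd_of_even (by simp)]
  · rw [if_pos (by simp), average_two_pow_reflectionCycles_of_odd_of_odd (by simp) (by simp)]
end
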